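/- Let σ₁, ε₁ be n×n real symmetric matrices, let σ₂ be an n×n real symmetric positive definite matrix, let ω ∈ ℝ, and let w, z ∈ ℂⁿ. Write M u · v := Σⱼ (Mu)ⱼ vⱼ and v̄ for componentwise conjugation. Then Re{σ₂ z · z̄ − (σ₁ − iωε₁) w · z̄ − (σ₁ + iωε₁) w̄ · z + σ₁ w · w̄} ≥ Re{(σ₁ − (σ₁ + iωε₁)σ₂⁻¹(σ₁ − iωε₁)) w · w̄}. -/

import Mathlib

/-!
Put `A = σ₁ - iωε₁` and `u = σ₂⁻¹ A w`. As `σ₂` is real and `A` is symmetric, `ū = σ₂⁻¹ Aᴴ w̄`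
with `Aᴴ = σ₁ + iωε₁`, and expanding `σ₂ (z - u) · (z̄ - ū)` yields the right-hand side minus the
left-hand side. Its real part is the real quadratic form of `σ₂` evaluated at `Re (z - u)` plus the
one at `Im (z - u)`, hence nonnegative.
-/

open Matrix

namespace Matrix

section CompleteSquare

variable {n R : Type*} [Fintype n] [DecidableEq n] [CommRing R]

theorem mulVec_sub_dotProduct_sub_eq {S A B : Matrix n n R} (hS : IsUnit S.det)
    (hSsymm : S.IsSymm) (hB : B.IsSymm) (z z' w w' : n → R) :
    (S *ᵥ (z - S⁻¹ *ᵥ A *ᵥ w)) ⬝ᵥ (z' - S⁻¹ *ᵥ B *ᵥ w')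
      = (S *ᵥ z) ⬝ᵥ z' - (A *ᵥ w) ⬝ᵥ z' - (B *ᵥ w') ⬝ᵥ z
        + ((B * S⁻¹ * A) *ᵥ w) ⬝ᵥ w' := by
  have hcross : (S *ᵥ z) ⬝ᵥ (S⁻¹ *ᵥ B *ᵥ w') = (B *ᵥ w') ⬝ᵥ z := by
    rw [← hSsymm.eq, ← vecMul_transpose, transpose_transpose, ← dotProduct_mulVec,
      hSsymm.eq, mulVec_mulVec, mul_nonsing_inv _ hS, one_mulVec, dotProduct_comm]
  have hsquare : (A *ᵥ w) ⬝ᵥ (S⁻¹ *ᵥ B *ᵥ w') = ((B * S⁻¹ * A) *ᵥ w) ⬝ᵥ w' := by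
    rw [mulVec_mulVec, dotProduct_mulVec, ← mulVec_transpose, mulVec_mulVec, transpose_mul,
      hB.eq, hSsymm.inv.eq]
  rw [mulVec_sub, mulVec_mulVec, mul_nonsing_inv _ hS, one_mulVec, sub_dotProduct,
    dotProduct_sub, dotProduct_sub, hcross, hsquare]
  ring

variable [StarRing R]

theorem star_inv_mulVec_mulVec {S A : Matrix n n R} (hSherm : S.IsHermitian)
    (hSsymm : S.IsSymm) (hA : A.IsSymm) (w : n → R) :
    star (S⁻¹ *ᵥ A *ᵥ w) = S⁻¹ *ᵥ Aᴴ *ᵥ star w := by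
  rw [mulVec_mulVec, star_mulVec, ← mulVec_transpose, conjTranspose_mul, transpose_mul,
    hSherm.inv.eq, hSsymm.inv.eq, conjTranspose_transpose, ← transpose_conjTranspose, hA.eq,
    mulVec_mulVec]

theorem mulVec_sub_dotProduct_star_sub_eq {S A : Matrix n n R} (hS : IsUnit S.det)
    (hSherm : S.IsHermitian) (hSsymm : S.IsSymm) (hA : A.IsSymm) (z w : n → R) :
    (S *ᵥ (z - S⁻¹ *ᵥ A *ᵥ w)) ⬝ᵥ star (z - S⁻¹ *ᵥ A *ᵥ w)
      = (S *ᵥ z) ⬝ᵥ star z - (A *ᵥ w) ⬝ᵥ star z - (Aᴴ *ᵥ star w) ⬝ᵥ z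
        + ((Aᴴ * S⁻¹ * A) *ᵥ w) ⬝ᵥ star w := by
  have hAH : Aᴴ.IsSymm := by
    rw [IsSymm, conjTranspose_transpose, ← transpose_conjTranspose, hA.eq]
  rw [star_sub, star_inv_mulVec_mulVec hSherm hSsymm hA]
  exact mulVec_sub_dotProduct_sub_eq hS hSsymm hAH z (star z) w (star w)

end CompleteSquare

variable {n : Type*}

theorem det_ne_zero_of_dotProduct_mulVec_pos {R : Type*} [Fintype n] [DecidableEq n]
    [CommRing R] [IsDomain R] [Preorder R] {S : Matrix n n R}
    (hS : ∀ ξ, ξ ≠ 0 → 0 < (S *ᵥ ξ) ⬝ᵥ ξ) : S.det ≠ 0 := fun h0 ↦ by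
  obtain ⟨ξ, hξ, hSξ⟩ := exists_mulVec_eq_zero_iff.mpr h0
  simpa [hSξ] using hS ξ hξ

theorem isHermitian_map_ofReal {S : Matrix n n ℝ} (hS : S.IsSymm) :
    (S.map Complex.ofReal).IsHermitian :=
  (isHermitian_iff_isSymm.mpr hS).map _ fun x ↦ (Complex.conj_ofReal x).symm

variable [Fintype n]

theorem re_map_ofReal_mulVec_dotProduct_star (S : Matrix n n ℝ) (v : n → ℂ) :
    ((S.map Complex.ofReal *ᵥ v) ⬝ᵥ star v).re
      = (S *ᵥ fun i ↦ (v i).re) ⬝ᵥ (fun i ↦ (v i).re)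
        + (S *ᵥ fun i ↦ (v i).im) ⬝ᵥ (fun i ↦ (v i).im) := by
  simp only [mulVec, dotProduct, map_apply, Pi.star_apply, Finset.sum_mul, Complex.re_sum,
    ← Finset.sum_add_distrib]
  refine Finset.sum_congr rfl fun i _ ↦ Finset.sum_congr rfl fun j _ ↦ ?_
  simp [Complex.mul_re]

theorem re_map_ofReal_mulVec_dotProduct_star_nonneg {S : Matrix n n ℝ}
    (hS : ∀ ξ, ξ ≠ 0 → 0 < (S *ᵥ ξ) ⬝ᵥ ξ) (v : n → ℂ) :
    0 ≤ ((S.map Complex.ofReal *ᵥ v) ⬝ᵥ star v).re := by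
  have hS' (ξ : n → ℝ) : 0 ≤ (S *ᵥ ξ) ⬝ᵥ ξ := by
    rcases eq_or_ne ξ 0 with rfl | hξ
    · simp
    · exact (hS ξ hξ).le
  rw [re_map_ofReal_mulVec_dotProduct_star]
  exact add_nonneg (hS' _) (hS' _)

end Matrix

/-- Completion-of-the-square inequality (2.4). -/
theorem stmt_9 (n : ℕ) (σ₁ ε₁ σ₂ : Matrix (Fin n) (Fin n) ℝ)
    (hσ₁ : σ₁.IsSymm) (hε₁ : ε₁.IsSymm) (hσ₂sym : σ₂.IsSymm)
    (hσ₂pos : ∀ ξ : Fin n → ℝ, ξ ≠ 0 → 0 < (σ₂.mulVec ξ) ⬝ᵥ ξ)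
    (ω : ℝ) (w z : Fin n → ℂ)
    (σ₁c σ₂c ε₁c : Matrix (Fin n) (Fin n) ℂ)
    (hσ₁c : σ₁c = σ₁.map Complex.ofReal) (hσ₂c : σ₂c = σ₂.map Complex.ofReal)
    (hε₁c : ε₁c = ε₁.map Complex.ofReal) :
    (((σ₁c - (σ₁c + (Complex.I * (ω : ℂ)) • ε₁c) * σ₂c⁻¹
        * (σ₁c - (Complex.I * (ω : ℂ)) • ε₁c)).mulVec w) ⬝ᵥ star w).re
      ≤ ((σ₂c.mulVec z) ⬝ᵥ star z
          - ((σ₁c - (Complex.I * (ω : ℂ)) • ε₁c).mulVec w) ⬝ᵥ star z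
          - ((σ₁c + (Complex.I * (ω : ℂ)) • ε₁c).mulVec (star w)) ⬝ᵥ z
          + (σ₁c.mulVec w) ⬝ᵥ star w).re := by
  subst hσ₁c hσ₂c hε₁c
  have hdet : IsUnit (σ₂.map Complex.ofReal).det :=
    RingHom.map_det Complex.ofRealHom σ₂ ▸
      (isUnit_iff_ne_zero.mpr (det_ne_zero_of_dotProduct_mulVec_pos hσ₂pos)).map _
  set A := σ₁.map Complex.ofReal - (Complex.I * (ω : ℂ)) • ε₁.map Complex.ofReal
  have hA : A.IsSymm := (hσ₁.map _).sub ((hε₁.map _).smul _)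
  have hAH : Aᴴ = σ₁.map Complex.ofReal + (Complex.I * (ω : ℂ)) • ε₁.map Complex.ofReal := by
    simp [A, conjTranspose_sub, conjTranspose_smul, (isHermitian_map_ofReal hσ₁).eq,
      (isHermitian_map_ofReal hε₁).eq]
  have hnonneg := re_map_ofReal_mulVec_dotProduct_star_nonneg hσ₂pos
    (z - (σ₂.map Complex.ofReal)⁻¹ *ᵥ A *ᵥ w)
  rw [mulVec_sub_dotProduct_star_sub_eq hdet (isHermitian_map_ofReal hσ₂sym) (hσ₂sym.map _)
    hA z w, hAH] at hnonneg
  rw [sub_mulVec, sub_dotProduct]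
  simp only [Complex.sub_re, Complex.add_re] at hnonneg ⊢
  linarith
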